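/- arXiv:2101.12341 — 5 statements merged into one kernel-verified Lean document; each statement's English description precedes it below -/
import Mathlib

section
/- In a Wheeler graph, for any pattern P over the edge-label alphabet, the set of vertices reachable by directed paths labelled P forms a (possibly empty) interval in the Wheeler order. -/
/-- A Wheeler graph: a directed multigraph with vertex set `V`, edge set `E`,
edge labels in a totally ordered alphabet `A`, whose (total) Wheeler order on
the vertices satisfies: vertices of in-degree 0 precede those of positive
in-degree, and for edges `e`, `e'` with labels `a`, `a'`:
if `a ≺ a'` then `tgt e < tgt e'`; if `a = a'` and `src e < src e'` then
`tgt e ≤ tgt e'`. -/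
structure WheelerGraph (V E A : Type) [LinearOrder V] [LinearOrder A] where
  src : E → V
  tgt : E → V
  lab : E → A
  indeg0_first : ∀ v w : V, (¬ ∃ e, tgt e = v) → (∃ e, tgt e = w) → v < w
  mono_lt : ∀ e e' : E, lab e < lab e' → tgt e < tgt e'
  mono_eq : ∀ e e' : E, lab e = lab e' → src e < src e' → tgt e ≤ tgt e'

/-- `G.Reach P v` : vertex `v` is reachable by a directed path labelled `P`
(every vertex is reachable by the empty path; backward-search semantics:
`v` is reachable by `a :: Q` iff `v` is the target of an `a`-labelled edge
whose source is reachable by `Q`). -/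
inductive WheelerGraph.Reach {V E A : Type} [LinearOrder V] [LinearOrder A]
    (G : WheelerGraph V E A) : List A → V → Prop
  | nil (v : V) : WheelerGraph.Reach G [] v
  | cons (e : E) {Q : List A} : WheelerGraph.Reach G Q (G.src e) →
      WheelerGraph.Reach G (G.lab e :: Q) (G.tgt e)

/-- `u'` immediately precedes `u` in the Wheeler order. -/
def ImmPred {V : Type} [LinearOrder V] (u' u : V) : Prop :=
  u' < u ∧ ¬ ∃ w, u' < w ∧ w < u

/-!
Induction on the pattern. A vertex strictly between two vertices reachable by `a :: Q`
follows a vertex with an incoming edge, so it has an incoming edge `e` itself. The label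
axiom pins the label of `e` to `a`, and the source axiom places the source of `e` between
the sources of the two outer edges, which is reachable by `Q` by induction.
-/

namespace WheelerGraph

variable {V E A : Type} [LinearOrder V] [LinearOrder A] (G : WheelerGraph V E A)

theorem Reach.exists_of_cons {G : WheelerGraph V E A} {a : A} {Q : List A} {v : V}
    (h : G.Reach (a :: Q) v) : ∃ e, G.lab e = a ∧ G.tgt e = v ∧ G.Reach Q (G.src e) := by
  cases h with
  | cons e hs => exact ⟨e, rfl, rfl, hs⟩

theorem exists_tgt_eq_of_lt {v w : V} (hv : ∃ e, G.tgt e = v) (hvw : v < w) :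
    ∃ e, G.tgt e = w :=
  by_contra fun hw => (G.indeg0_first w v hw hv).not_gt hvw

theorem lab_le_of_tgt_le {e e' : E} (h : G.tgt e ≤ G.tgt e') : G.lab e ≤ G.lab e' :=
  le_of_not_gt fun hlt => (G.mono_lt e' e hlt).not_ge h

theorem src_le_of_tgt_lt {e e' : E} (hl : G.lab e = G.lab e') (h : G.tgt e < G.tgt e') :
    G.src e ≤ G.src e' :=
  le_of_not_gt fun hlt => (G.mono_eq e' e hl.symm hlt).not_gt h

theorem reach_cons_of_lt_of_lt {a : A} {Q : List A} {v₁ v₂ v₃ : V}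
    (ih : Set.OrdConnected {u | G.Reach Q u})
    (h₁ : G.Reach (a :: Q) v₁) (h₃ : G.Reach (a :: Q) v₃) (h₁₂ : v₁ < v₂) (h₂₃ : v₂ < v₃) :
    G.Reach (a :: Q) v₂ := by
  obtain ⟨e₁, rfl, rfl, hs₁⟩ := h₁.exists_of_cons
  obtain ⟨e₃, hl₃, rfl, hs₃⟩ := h₃.exists_of_cons
  obtain ⟨e, rfl⟩ := G.exists_tgt_eq_of_lt ⟨e₁, rfl⟩ h₁₂
  have hlab : G.lab e = G.lab e₁ :=
    le_antisymm (hl₃ ▸ G.lab_le_of_tgt_le h₂₃.le) (G.lab_le_of_tgt_le h₁₂.le)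
  have hsrc : G.src e ∈ Set.Icc (G.src e₁) (G.src e₃) :=
    ⟨G.src_le_of_tgt_lt hlab.symm h₁₂, G.src_le_of_tgt_lt (hlab.trans hl₃.symm) h₂₃⟩
  exact hlab ▸ Reach.cons e (ih.out hs₁ hs₃ hsrc)

theorem ordConnected_setOf_reach (P : List A) : Set.OrdConnected {v | G.Reach P v} := by
  induction P with
  | nil => exact ⟨fun _ _ _ _ v _ => Reach.nil v⟩
  | cons a Q ih =>
    refine ⟨fun v₁ h₁ v₃ h₃ v₂ ⟨h₁₂, h₂₃⟩ => ?_⟩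
    rcases h₁₂.eq_or_lt with rfl | h₁₂
    · exact h₁
    rcases h₂₃.eq_or_lt with rfl | h₂₃
    · exact h₃
    exact G.reach_cons_of_lt_of_lt ih h₁ h₃ h₁₂ h₂₃

end WheelerGraph

/-- In a Wheeler graph, the set of vertices reachable by directed
paths labelled `P` forms a (possibly empty) interval in the Wheeler order. -/
theorem wheeler_reach_interval {V E A : Type} [LinearOrder V] [LinearOrder A]
    (G : WheelerGraph V E A) (P : List A) :
    ∀ v₁ v₂ v₃ : V, G.Reach P v₁ → G.Reach P v₃ → v₁ ≤ v₂ → v₂ ≤ v₃ →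
      G.Reach P v₂ :=
  fun _ _ _ h₁ h₃ h₁₂ h₂₃ => (G.ordConnected_setOf_reach P).out h₁ h₃ ⟨h₁₂, h₂₃⟩
end

section
/- In a Wheeler graph, for any pattern P of length m and any i ≤ m, if [s_{i+1}, e_{i+1}] is the interval in the Wheeler order of vertices reachable by paths labelled P[i+1..m-1], then every vertex reachable by a path labelled P[i..m-1] is the target of an edge labelled P[i] whose source lies in [s_{i+1}, e_{i+1}], and conversely every target of such an edge is reachable by a path labelled P[i..m-1]. -/
theorem WheelerGraph.reach_cons_iff {V E A : Type} [LinearOrder V] [LinearOrder A]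
    (G : WheelerGraph V E A) (a : A) (Q : List A) (v : V) :
    G.Reach (a :: Q) v ↔ ∃ e : E, G.lab e = a ∧ G.Reach Q (G.src e) ∧ G.tgt e = v := by
  constructor
  · rintro (_ | ⟨e, hQ⟩)
    exact ⟨e, rfl, hQ, rfl⟩
  · rintro ⟨e, rfl, hQ, rfl⟩
    exact .cons e hQ

/-- if `[s, t]` is the interval of vertices reachable by paths
labelled `P[i+1..m-1]`, then the vertices reachable by paths labelled
`P[i..m-1]` are exactly the targets of edges labelled `P[i]` whose sources
lie in `[s, t]`. -/
theorem wheeler_backward_step {V E A : Type} [LinearOrder V] [LinearOrder A]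
    (G : WheelerGraph V E A) (P : List A) (i : ℕ) (hi : i < P.length)
    (s t : V)
    (hint : ∀ v, G.Reach (P.drop (i + 1)) v ↔ v ∈ Set.Icc s t) :
    ∀ v, G.Reach (P.drop i) v ↔
      ∃ e : E, G.lab e = P.get ⟨i, hi⟩ ∧ G.src e ∈ Set.Icc s t ∧ G.tgt e = v := by
  intro v
  rw [List.drop_eq_getElem_cons hi, G.reach_cons_iff]
  simp only [hint, List.get_eq_getElem]
end

section
/- In a Wheeler graph whose vertex set is totally ordered by the Wheeler order, for each label a the targets of a-labelled edges form an interval: if v₁ < v₂ < v₃, and v₁ and v₃ each have an incoming edge labelled a, then every incoming edge of v₂ is labelled a (provided v₂ has positive in-degree). -/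
theorem WheelerGraph.lab_le_of_tgt_le_s8 {V E A : Type} [LinearOrder V] [LinearOrder A]
    (G : WheelerGraph V E A) {e e' : E} (h : G.tgt e ≤ G.tgt e') : G.lab e ≤ G.lab e' :=
  not_lt.1 fun hlt => (G.mono_lt e' e hlt).not_ge h

/-- for each label `a` the targets of `a`-labelled edges form an
interval: if `v₁ < v₂ < v₃`, `v₁` and `v₃` each have incoming `a`-edges, then
every incoming edge of `v₂` is labelled `a`. -/
theorem wheeler_label_targets_interval {V E A : Type} [LinearOrder V]
    [LinearOrder A] (G : WheelerGraph V E A) (a : A) (v₁ v₂ v₃ : V)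
    (h12 : v₁ < v₂) (h23 : v₂ < v₃) (e₁ e₃ : E)
    (he₁ : G.tgt e₁ = v₁ ∧ G.lab e₁ = a) (he₃ : G.tgt e₃ = v₃ ∧ G.lab e₃ = a) :
    ∀ e : E, G.tgt e = v₂ → G.lab e = a := by
  obtain ⟨hv₁, ha₁⟩ := he₁
  obtain ⟨hv₃, ha₃⟩ := he₃
  intro e he
  apply le_antisymm
  · exact ha₃ ▸ G.lab_le_of_tgt_le_s8 (he.le.trans (h23.le.trans hv₃.ge))
  · exact ha₁ ▸ G.lab_le_of_tgt_le_s8 (hv₁.le.trans (h12.le.trans he.ge))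
end

section
/- In a Wheeler graph, for any pattern P and any index i, letting [s_{i+1}, e_{i+1}] be the interval of vertices reachable by paths labelled P[i+1..m-1], the last vertex (in the Wheeler order) reachable by a path labelled P[i..m-1] is the target of the edge labelled P[i] whose source in [s_{i+1}, e_{i+1}] is maximal among sources in that interval with an outgoing P[i]-edge (choosing, among that source's P[i]-edges, one with maximal target). -/
namespace WheelerGraph

variable {V E A : Type} [LinearOrder V] [LinearOrder A] (G : WheelerGraph V E A)

theorem reach_cons_iff_s10 {a : A} {Q : List A} {v : V} :
    G.Reach (a :: Q) v ↔ ∃ f : E, G.lab f = a ∧ G.tgt f = v ∧ G.Reach Q (G.src f) := by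
  constructor
  · rintro (_ | ⟨f, hf⟩)
    exact ⟨f, rfl, rfl, hf⟩
  · rintro ⟨f, rfl, rfl, hf⟩
    exact .cons f hf

theorem isGreatest_reach_cons {a : A} {Q : List A} {e : E} (hlab : G.lab e = a)
    (hsrc : G.Reach Q (G.src e))
    (hmax_src : ∀ f : E, G.lab f = a → G.Reach Q (G.src f) → G.src f ≤ G.src e)
    (hmax_tgt : ∀ f : E, G.lab f = a → G.src f = G.src e → G.tgt f ≤ G.tgt e) :
    IsGreatest {v | G.Reach (a :: Q) v} (G.tgt e) := by
  refine ⟨hlab ▸ .cons e hsrc, ?_⟩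
  intro v hv
  obtain ⟨f, hfa, rfl, hf⟩ := G.reach_cons_iff_s10.1 hv
  rcases (hmax_src f hfa hf).lt_or_eq with hlt | heq
  · exact G.mono_eq f e (hfa.trans hlab.symm) hlt
  · exact hmax_tgt f hfa heq

end WheelerGraph

/-- the last vertex reachable by a path labelled `P[i..m-1]` is
the target of the edge labelled `P[i]` whose source is maximal among sources
in the interval for `P[i+1..m-1]` with an outgoing `P[i]`-edge, chosen among
that source's `P[i]`-edges with maximal target. -/
theorem wheeler_toehold_last {V E A : Type} [LinearOrder V] [LinearOrder A]
    (G : WheelerGraph V E A) (P : List A) (i : ℕ) (hi : i < P.length) (e : E)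
    (hlab : G.lab e = P.get ⟨i, hi⟩)
    (hsrc : G.Reach (P.drop (i + 1)) (G.src e))
    (hmax_src : ∀ f : E, G.lab f = P.get ⟨i, hi⟩ →
      G.Reach (P.drop (i + 1)) (G.src f) → G.src f ≤ G.src e)
    (hmax_tgt : ∀ f : E, G.lab f = P.get ⟨i, hi⟩ → G.src f = G.src e →
      G.tgt f ≤ G.tgt e) :
    G.Reach (P.drop i) (G.tgt e) ∧
      ∀ v : V, G.Reach (P.drop i) v → v ≤ G.tgt e := by
  rw [List.drop_eq_getElem_cons hi]
  exact G.isGreatest_reach_cons hlab hsrc hmax_src hmax_tgt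
end

section
/- In a Wheeler graph equipped with a Burrows-Wheeler Transform B (a permutation of the edge labels such that edges with smaller source in the Wheeler order have their labels earlier in B, and labels of a common source appear in order of their targets), the labels in B appear in non-decreasing order of their edges' targets: if label of edge e appears before label of edge e' in B, then target(e) ≤ target(e') whenever the two labels are equal. -/
theorem wheeler_bwt_targets_monotone_general {V E A : Type} [LinearOrder V]
    [LinearOrder A] (G : WheelerGraph V E A) (B : E → ℕ)
    (hBsrc : ∀ e e' : E, G.src e < G.src e' → B e < B e')
    (hBtgt : ∀ e e' : E, G.src e = G.src e' → G.tgt e < G.tgt e' → B e < B e')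
    (e e' : E) (hlab : G.lab e = G.lab e') (hB : B e < B e') :
    G.tgt e ≤ G.tgt e' := by
  rcases lt_trichotomy (G.src e) (G.src e') with hsrc | hsrc | hsrc
  · exact G.mono_eq e e' hlab hsrc
  · exact not_lt.mp fun htgt => (hBtgt e' e hsrc.symm htgt).not_gt hB
  · exact absurd (hBsrc e' e hsrc) hB.not_gt

/-- in a BWT `B` of a Wheeler graph (given by the position
`B e` of each edge's label, with edges of smaller source earlier and labels
of a common source in order of targets), equally-labelled edges appear in
non-decreasing order of their targets. -/
theorem wheeler_bwt_targets_monotone {V E A : Type} [LinearOrder V]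
    [LinearOrder A] (G : WheelerGraph V E A) (B : E → ℕ)
    (hBinj : Function.Injective B)
    (hBsrc : ∀ e e' : E, G.src e < G.src e' → B e < B e')
    (hBtgt : ∀ e e' : E, G.src e = G.src e' → G.tgt e < G.tgt e' → B e < B e')
    (e e' : E) (hlab : G.lab e = G.lab e') (hB : B e < B e') :
    G.tgt e ≤ G.tgt e' :=
  wheeler_bwt_targets_monotone_general G B hBsrc hBtgt e e' hlab hB
end
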